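/- arXiv:0707.3866 — 2 statements merged into one kernel-verified Lean document; each statement's English description precedes it below -/
import Mathlib

section
/- The jump times of the process U are exhausted by the countable family of stopping-time pairs: define for x > 0 and n ≥ 1, T_1^x = inf{t : U_t > x}, S_n^x = inf{t > T_n^x : U_t = 0}, T_{n+1}^x = inf{t > S_n^x : U_t > x}. Then the set of jump times D = {t > 0 : ΔU_t ≠ 0} satisfies D = ⋃_{x ∈ ℚ, x>0} ⋃_{n≥1} {S_n^x}. -/
/-!
A time `t > 0` is a jump of `U` exactly when `t` is the right endpoint of a gap `(a, t)` of the
closed set `M`: there `U` drops from `t - a` to `0`. Fix `x > 0`. Right endpoints of gaps longer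
than `x` are more than `x` apart, so they form an increasing sequence `b₀ < b₁ < ⋯`, and since `U`
exceeds `x` only in the last part of such gaps, induction on `n` gives `T_{n+1}^x = aₙ + x` and
`S_{n+1}^x = bₙ`, where `(aₙ, bₙ)` is the `n`-th such gap. Conversely, a finite `S_n^x` is the first
zero of `U` after the time `T_n^x`, which does not lie in `M`, so it closes a gap. Every gap is
longer than some rational `x`.
-/

open Set Function Filter Topology

namespace AgeProcess

noncomputable section

/-- `inf {t : P t}` computed in `EReal`, so that the infimum of the empty set is `⊤`. -/
def timeInf (P : ℝ → Prop) : EReal := sInf {u : EReal | ∃ t : ℝ, u = t ∧ P t}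

lemma timeInf_eq_coe_iff {P : ℝ → Prop} {r : ℝ} : timeInf P = r ↔ IsGLB {t | P t} r := by
  have himage : {u : EReal | ∃ t : ℝ, u = t ∧ P t} = ((↑) : ℝ → EReal) '' {t | P t} := by
    ext u
    simp [eq_comm, and_comm]
  rw [timeInf, himage, ← isGLB_iff_sInf_eq]
  refine ⟨.of_image EReal.coe_le_coe_iff, fun h => ⟨?_, fun e he => ?_⟩⟩
  · rintro _ ⟨s, hs, rfl⟩
    exact EReal.coe_le_coe_iff.2 (h.1 hs)
  · obtain ⟨s, hs⟩ := h.nonempty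
    induction e using EReal.rec with
    | bot => exact bot_le
    | coe e =>
      exact EReal.coe_le_coe_iff.2 (h.2 fun s hs => EReal.coe_le_coe_iff.1 (he ⟨s, hs, rfl⟩))
    | top => exact absurd (he ⟨s, hs, rfl⟩) (by simp)

lemma coe_le_timeInf {P : ℝ → Prop} {r : ℝ} (h : ∀ t, P t → r ≤ t) : (r : EReal) ≤ timeInf P :=
  le_sInf <| by
    rintro _ ⟨t, rfl, ht⟩
    exact EReal.coe_le_coe_iff.2 (h t ht)

structure IsClosedFromZero (M : Set ℝ) : Prop where
  isClosed : IsClosed M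
  zero_mem : (0 : ℝ) ∈ M
  nonneg : ∀ t ∈ M, 0 ≤ t

lemma isClosedFromZero_of_preimage {f : ℝ → ℝ} (hf : Continuous f) {L : Set ℝ} (hL : IsClosed L) :
    IsClosedFromZero ({t | 0 ≤ t ∧ f t ∈ L} ∪ {0}) where
  isClosed := (isClosed_Ici.inter (hL.preimage hf)).union isClosed_singleton
  zero_mem := Or.inr rfl
  nonneg := by rintro t (⟨ht, -⟩ | rfl) <;> simp [*]

def lastZero (M : Set ℝ) (t : ℝ) : ℝ := sSup (M ∩ Icc 0 t)

def age (M : Set ℝ) (t : ℝ) : ℝ := t - lastZero M t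

structure IsGap (M : Set ℝ) (a b : ℝ) : Prop where
  left_mem : a ∈ M
  right_mem : b ∈ M
  lt : a < b
  disjoint : Disjoint (Ioo a b) M

def bigGapEnds (M : Set ℝ) (x : ℝ) : Set ℝ := {b | ∃ a, IsGap M a b ∧ a + x < b}

/-- `T n` and `S n` are the statement's `T_{n+1}^x` and `S_{n+1}^x`. -/
structure IsExcursionTimes (M : Set ℝ) (x : ℝ) (T S : ℕ → EReal) : Prop where
  T_zero : T 0 = timeInf fun t => 0 ≤ t ∧ x < age M t
  S_eq : ∀ n, S n = timeInf fun t => T n < t ∧ age M t = 0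
  T_succ : ∀ n, T (n + 1) = timeInf fun t => S n < t ∧ x < age M t

variable {M : Set ℝ} {a b c s t x : ℝ}

lemma lastZero_nonneg (M : Set ℝ) (t : ℝ) : 0 ≤ lastZero M t :=
  Real.sSup_nonneg fun _ h => h.2.1

-- For `t < 0` the set `M ∩ [0, t]` is empty and `lastZero M t = sSup ∅ = 0`.
lemma age_le_self (M : Set ℝ) (t : ℝ) : age M t ≤ t :=
  sub_le_self _ (lastZero_nonneg M t)

lemma pos_of_lt_age (hx : 0 ≤ x) (h : x < age M t) : 0 < t :=
  hx.trans_lt (h.trans_le (age_le_self M t))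

lemma IsGap.left_unique {a' : ℝ} (h : IsGap M a b) (h' : IsGap M a' b) : a = a' := by
  by_contra hne
  rcases lt_or_gt_of_ne hne with hlt | hlt
  · exact disjoint_left.1 h.disjoint ⟨hlt, h'.lt⟩ h'.left_mem
  · exact disjoint_left.1 h'.disjoint ⟨hlt, h.lt⟩ h.left_mem

lemma IsGap.le_of_mem (h : IsGap M a b) (hc : c ∈ M) (hcb : c < b) : c ≤ a :=
  not_lt.1 fun hac => disjoint_left.1 h.disjoint ⟨hac, hcb⟩ hc

lemma bigGapEnds_add_lt {b' : ℝ} (hb : b ∈ bigGapEnds M x) (hb' : b' ∈ bigGapEnds M x)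
    (hlt : b < b') : b + x < b' := by
  obtain ⟨a, hab, -⟩ := hb
  obtain ⟨a', hab', hxab'⟩ := hb'
  linarith [hab'.le_of_mem hab.right_mem hlt]

lemma IsExcursionTimes.exists_T_eq_timeInf {T S : ℕ → EReal} (hTS : IsExcursionTimes M x T S)
    (n : ℕ) :
    ∃ Q : ℝ → Prop, T n = timeInf fun t => Q t ∧ x < age M t := by
  cases n with
  | zero => exact ⟨_, hTS.T_zero⟩
  | succ n => exact ⟨_, hTS.T_succ n⟩

namespace IsClosedFromZero

variable (hM : IsClosedFromZero M)
include hM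

lemma isGreatest_lastZero (ht : 0 ≤ t) : IsGreatest (M ∩ Icc 0 t) (lastZero M t) :=
  ⟨(hM.isClosed.inter isClosed_Icc).csSup_mem ⟨0, hM.zero_mem, le_rfl, ht⟩ ⟨t, fun _ h => h.2.2⟩,
    fun _ h => le_csSup ⟨t, fun _ h => h.2.2⟩ h⟩

lemma lastZero_mem (ht : 0 ≤ t) : lastZero M t ∈ M :=
  (hM.isGreatest_lastZero ht).1.1

lemma lastZero_le (ht : 0 ≤ t) : lastZero M t ≤ t :=
  (hM.isGreatest_lastZero ht).1.2.2

lemma le_lastZero (hc : c ∈ M) (hct : c ≤ t) : c ≤ lastZero M t :=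
  (hM.isGreatest_lastZero ((hM.nonneg c hc).trans hct)).2 ⟨hc, hM.nonneg c hc, hct⟩

lemma age_nonneg (ht : 0 ≤ t) : 0 ≤ age M t :=
  sub_nonneg.2 (hM.lastZero_le ht)

lemma age_le_sub (hc : c ∈ M) (hct : c ≤ t) : age M t ≤ t - c :=
  sub_le_sub_left (hM.le_lastZero hc hct) t

lemma age_eq_zero_iff (ht : 0 ≤ t) : age M t = 0 ↔ t ∈ M := by
  refine ⟨fun h => ?_, fun h => ?_⟩
  · rw [sub_eq_zero.1 h]
    exact hM.lastZero_mem ht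
  · exact sub_eq_zero.2 (le_antisymm (hM.le_lastZero h le_rfl) (hM.lastZero_le ht))

lemma age_eq_of_disjoint (ha : a ∈ M) (hat : a ≤ t) (hdisj : Disjoint (Ioc a t) M) :
    age M t = t - a := by
  have ht : 0 ≤ t := (hM.nonneg a ha).trans hat
  have hlast : lastZero M t = a :=
    le_antisymm
      (not_lt.1 fun h => disjoint_left.1 hdisj ⟨h, hM.lastZero_le ht⟩ (hM.lastZero_mem ht))
      (hM.le_lastZero ha hat)
  rw [age, hlast]

lemma age_eq_of_isGap (hab : IsGap M a b) (hs : s ∈ Ioo a b) : age M s = s - a :=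
  hM.age_eq_of_disjoint hab.left_mem hs.1.le (hab.disjoint.mono_left (Ioc_subset_Ioo_right hs.2))

lemma leftLim_age_of_disjoint (ha : a ∈ M) (hat : a < t) (hdisj : Disjoint (Ioo a t) M) :
    leftLim (age M) t = t - a := by
  apply leftLim_eq_of_tendsto
  have hcont : Tendsto (fun s => s - a) (𝓝[<] t) (𝓝 (t - a)) :=
    ((continuous_sub_right a).tendsto t).mono_left nhdsWithin_le_nhds
  refine hcont.congr' (eventuallyEq_of_mem (Ioo_mem_nhdsLT hat) fun s hs => ?_)
  exact (hM.age_eq_of_disjoint ha hs.1.le (hdisj.mono_left (Ioc_subset_Ioo_right hs.2))).symm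

lemma leftLim_age_of_mem_closure (ht : t ∈ closure (M ∩ Iio t)) : leftLim (age M) t = 0 := by
  obtain ⟨m, hm⟩ : (M ∩ Iio t).Nonempty := closure_nonempty_iff.1 ⟨t, ht⟩
  apply leftLim_eq_of_tendsto
  refine tendsto_order.2 ⟨fun ε hε => ?_, fun ε hε => ?_⟩
  · filter_upwards [Ioo_mem_nhdsLT hm.2] with s hs
    exact hε.trans_le (hM.age_nonneg ((hM.nonneg m hm.1).trans hs.1.le))
  · obtain ⟨m', hm', hdist⟩ := Metric.mem_closure_iff.1 ht ε hε
    rw [Real.dist_eq, abs_of_nonneg (sub_nonneg.2 hm'.2.le)] at hdist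
    filter_upwards [Ioo_mem_nhdsLT hm'.2] with s hs
    linarith [hM.age_le_sub hm'.1 hs.1.le, hs.2]

theorem pos_and_age_ne_leftLim_iff :
    (0 < t ∧ age M t ≠ leftLim (age M) t) ↔ ∃ a, IsGap M a t := by
  constructor
  · rintro ⟨ht, hjump⟩
    have hclosure : closure (M ∩ Iio t) ⊆ M := hM.isClosed.closure_subset_iff.2 inter_subset_left
    by_cases hcl : t ∈ closure (M ∩ Iio t)
    · rw [(hM.age_eq_zero_iff ht.le).2 (hclosure hcl), hM.leftLim_age_of_mem_closure hcl] at hjump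
      exact absurd rfl hjump
    have hne : (M ∩ Iio t).Nonempty := ⟨0, hM.zero_mem, ht⟩
    have hbdd : BddAbove (M ∩ Iio t) := ⟨t, fun _ h => h.2.le⟩
    have hacl := csSup_mem_closure hne hbdd
    set a := sSup (M ∩ Iio t)
    have haM : a ∈ M := hclosure hacl
    have hat : a < t :=
      (csSup_le hne fun _ h => h.2.le).lt_of_ne fun h => hcl (by rwa [show a = t from h] at hacl)
    have hdisj : Disjoint (Ioo a t) M :=
      disjoint_left.2 fun m hm hmM => hm.1.not_ge (le_csSup hbdd ⟨hmM, hm.2⟩)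
    refine ⟨a, haM, by_contra fun htM => hjump ?_, hat, hdisj⟩
    have hdisj' : Disjoint (Ioc a t) M := by
      rw [← Ioo_insert_right hat]
      exact disjoint_insert_left.2 ⟨htM, hdisj⟩
    rw [hM.age_eq_of_disjoint haM hat.le hdisj', hM.leftLim_age_of_disjoint haM hat hdisj]
  · rintro ⟨a, hab⟩
    have ht : 0 < t := (hM.nonneg a hab.left_mem).trans_lt hab.lt
    refine ⟨ht, fun h => ?_⟩
    rw [(hM.age_eq_zero_iff ht.le).2 hab.right_mem,
      hM.leftLim_age_of_disjoint hab.left_mem hab.lt hab.disjoint] at h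
    linarith [hab.lt]

lemma isGap_lastZero (hs : 0 ≤ s) (hc : c ∈ M) (hsc : s < c) (hdisj : Disjoint (Ioo s c) M) :
    IsGap M (lastZero M s) c where
  left_mem := hM.lastZero_mem hs
  right_mem := hc
  lt := (hM.lastZero_le hs).trans_lt hsc
  disjoint := disjoint_left.2 fun m hm hmM => by
    rcases le_or_gt m s with hms | hms
    · exact hm.1.not_ge (hM.le_lastZero hmM hms)
    · exact disjoint_left.1 hdisj ⟨hms, hm.2⟩ hmM

lemma exists_isGap_lastZero (hs : 0 ≤ s) (hsM : s ∉ M) (hb : b ∈ M) (hsb : s < b) :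
    ∃ c ∈ Ioc s b, IsGap M (lastZero M s) c := by
  have hbdd : BddBelow (M ∩ Icc s b) := ⟨s, fun _ h => h.2.1⟩
  obtain ⟨hcM, hsc, hcb⟩ : sInf (M ∩ Icc s b) ∈ M ∩ Icc s b :=
    (hM.isClosed.inter isClosed_Icc).csInf_mem ⟨b, hb, hsb.le, le_rfl⟩ hbdd
  have hsc' : s < sInf (M ∩ Icc s b) := hsc.lt_of_ne fun h => hsM (h ▸ hcM)
  refine ⟨_, ⟨hsc', hcb⟩, hM.isGap_lastZero hs hcM hsc' (disjoint_left.2 fun m hm hmM => ?_)⟩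
  exact hm.2.not_ge (csInf_le hbdd ⟨hmM, hm.1.le, hm.2.le.trans hcb⟩)

lemma finite_bigGapEnds_inter_Iio (hx : 0 < x) (R : ℝ) : (bigGapEnds M x ∩ Iio R).Finite := by
  have hmono : StrictMonoOn (fun b => ⌊b / x⌋) (bigGapEnds M x) := fun b hb b' hb' hlt => by
    have hsep : b / x + 1 ≤ b' / x := by
      rw [div_add_one hx.ne', div_le_div_iff_of_pos_right hx]
      exact (bigGapEnds_add_lt hb hb' hlt).le
    have := Int.floor_mono hsep
    rw [Int.floor_add_one] at this
    exact Int.lt_iff_add_one_le.2 this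
  refine Finite.of_injOn (t := Icc 0 ⌊R / x⌋) (fun b hb => ⟨?_, ?_⟩)
    (hmono.injOn.mono inter_subset_left) (finite_Icc _ _)
  · obtain ⟨⟨a, hab, hxab⟩, -⟩ := hb
    exact Int.floor_nonneg.2 (div_nonneg (by linarith [hM.nonneg a hab.left_mem]) hx.le)
  · exact Int.floor_mono (div_le_div_of_nonneg_right hb.2.le hx.le)

lemma add_le_of_lt_age (hx : 0 ≤ x) (hab : IsGap M a b) (hxab : a + x < b) (hs : x < age M s)
    (hE : ∀ e ∈ bigGapEnds M x, s < e → b ≤ e) : a + x ≤ s := by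
  by_contra! hlt
  have hs0 : 0 ≤ s := (pos_of_lt_age hx hs).le
  have hsM : s ∉ M := fun h => by linarith [(hM.age_eq_zero_iff hs0).2 h]
  -- `s` lies in a gap `(lastZero M s, c)` longer than `x`; by `hE` it must be the gap `(a, b)`.
  obtain ⟨c, ⟨hsc, hcb⟩, hgap⟩ := hM.exists_isGap_lastZero hs0 hsM hab.right_mem (hlt.trans hxab)
  have hcE : c ∈ bigGapEnds M x := ⟨_, hgap, by unfold age at hs; linarith⟩
  obtain rfl : c = b := le_antisymm hcb (hE c hcE hsc)
  have hs' : x < s - a := by rwa [hab.left_unique hgap]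
  linarith

lemma isGLB_setOf_lt_age (hx : 0 ≤ x) (hab : IsGap M a b) (hxab : a + x < b) {P : ℝ → Prop}
    (hP : ∀ s ∈ Ioo (a + x) b, P s) (hE : ∀ s, P s → ∀ e ∈ bigGapEnds M x, s < e → b ≤ e) :
    IsGLB {s | P s ∧ x < age M s} (a + x) :=
  (isGLB_Ioo hxab).of_subset_of_superset isGLB_Ici
    (fun s hs => ⟨hP s hs, by
      rw [hM.age_eq_of_isGap hab ⟨by linarith [hs.1], hs.2⟩]
      linarith [hs.1]⟩)
    (fun s hs => hM.add_le_of_lt_age hx hab hxab hs.2 (hE s hs.1))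

lemma notMem_of_isGLB_lt_age (hx : 0 < x) {B : Set ℝ} (hB : IsGLB B c)
    (hBx : ∀ s ∈ B, x < age M s) : c ∉ M := fun hc => by
  have : c + x ∈ lowerBounds B := fun s hs => by
    linarith [hM.age_le_sub hc (hB.1 hs), hBx s hs]
  linarith [hB.2 this]

variable {T S : ℕ → EReal} (hTS : IsExcursionTimes M x T S)
include hTS

lemma S_eq_of_T_eq (hx : 0 ≤ x) (hab : IsGap M a b) (hxab : a + x < b) {n : ℕ}
    (hTn : T n = ↑(a + x)) : S n = b := by
  rw [hTS.S_eq, hTn, timeInf_eq_coe_iff]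
  have ha := hM.nonneg a hab.left_mem
  refine IsLeast.isGLB ⟨⟨EReal.coe_lt_coe_iff.2 hxab,
    (hM.age_eq_zero_iff (by linarith)).2 hab.right_mem⟩, fun s ⟨hs, hs0⟩ => ?_⟩
  have hs' : a + x < s := EReal.coe_lt_coe_iff.1 hs
  have hsM := (hM.age_eq_zero_iff (by linarith)).1 hs0
  exact not_lt.1 fun hsb => disjoint_left.1 hab.disjoint ⟨by linarith, hsb⟩ hsM

lemma T_eq_and_S_eq_of_ncard (hx : 0 < x) (n : ℕ) : ∀ a b, IsGap M a b → a + x < b →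
    (bigGapEnds M x ∩ Iio b).ncard = n → T n = ↑(a + x) ∧ S n = b := by
  induction n with
  | zero =>
    intro a b hab hxab hcard
    have hempty := (ncard_eq_zero (hM.finite_bigGapEnds_inter_Iio hx b)).1 hcard
    have hT : T 0 = ↑(a + x) := by
      rw [hTS.T_zero, timeInf_eq_coe_iff]
      refine hM.isGLB_setOf_lt_age hx.le hab hxab (fun s hs => ?_) fun s _ e he _ => ?_
      · linarith [hs.1, hM.nonneg a hab.left_mem]
      · exact not_lt.1 fun heb => hempty.subset ⟨he, heb⟩
    exact ⟨hT, hM.S_eq_of_T_eq hTS hx.le hab hxab hT⟩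
  | succ n ih =>
    intro a b hab hxab hcard
    set F := bigGapEnds M x ∩ Iio b
    have hF : F.Finite := hM.finite_bigGapEnds_inter_Iio hx b
    have hne : F.Nonempty := nonempty_of_ncard_ne_zero (by omega)
    have hmax : ∀ e ∈ F, e ≤ sSup F := fun e he => le_csSup hF.bddAbove he
    obtain ⟨⟨a', hab', hxab'⟩, hb'b⟩ : sSup F ∈ F := hne.csSup_mem hF
    have hcard' : (bigGapEnds M x ∩ Iio (sSup F)).ncard = n := by
      have hF' : bigGapEnds M x ∩ Iio (sSup F) = F \ {sSup F} := by
        ext e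
        simp only [F, mem_inter_iff, mem_Iio, Set.mem_sdiff]
        constructor
        · rintro ⟨he, heb⟩
          exact ⟨⟨he, heb.trans hb'b⟩, heb.ne⟩
        · rintro ⟨⟨he, heb⟩, hne⟩
          exact ⟨he, (hmax e ⟨he, heb⟩).lt_of_ne hne⟩
      rw [hF', ncard_sdiff_singleton_of_mem (hne.csSup_mem hF), hcard]
      rfl
    have hS : S n = sSup F := (ih a' _ hab' hxab' hcard').2
    have hb'a : sSup F ≤ a := hab.le_of_mem hab'.right_mem hb'b
    have hT : T (n + 1) = ↑(a + x) := by
      rw [hTS.T_succ, hS, timeInf_eq_coe_iff]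
      refine hM.isGLB_setOf_lt_age hx.le hab hxab (fun s hs => ?_) fun s hs e he hse => ?_
      · exact EReal.coe_lt_coe_iff.2 (by linarith [hs.1])
      · exact not_lt.1 fun heb => (hmax e ⟨he, heb⟩).not_gt ((EReal.coe_lt_coe_iff.1 hs).trans hse)
    exact ⟨hT, hM.S_eq_of_T_eq hTS hx.le hab hxab hT⟩

lemma exists_S_eq (hx : 0 < x) (hab : IsGap M a b) (hxab : a + x < b) : ∃ n, S n = b :=
  ⟨_, (hM.T_eq_and_S_eq_of_ncard hTS hx _ a b hab hxab rfl).2⟩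

lemma exists_isGap_of_S_eq (hx : 0 < x) {n : ℕ} (hSn : S n = t) : ∃ a, IsGap M a t := by
  obtain ⟨Q, hQ⟩ := hTS.exists_T_eq_timeInf n
  have hxT : (x : EReal) ≤ T n := hQ ▸ coe_le_timeInf fun s hs => hs.2.le.trans (age_le_self M s)
  rw [hTS.S_eq, timeInf_eq_coe_iff] at hSn
  obtain ⟨s, hs, -⟩ := hSn.nonempty
  obtain ⟨c, hc⟩ : ∃ c : ℝ, T n = c :=
    ⟨(T n).toReal, (EReal.coe_toReal hs.ne_top (ne_bot_of_le_ne_bot (EReal.coe_ne_bot x) hxT)).symm⟩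
  have hxc : x ≤ c := EReal.coe_le_coe_iff.1 (hc ▸ hxT)
  have hcM : c ∉ M :=
    hM.notMem_of_isGLB_lt_age hx (timeInf_eq_coe_iff.1 (hQ.symm.trans hc)) fun s hs => hs.2
  have hzeros : {s : ℝ | T n < s ∧ age M s = 0} = M ∩ Ioi c := by
    ext s
    simp only [hc, mem_ofPred_eq, mem_inter_iff, mem_Ioi, EReal.coe_lt_coe_iff]
    exact ⟨fun h => ⟨(hM.age_eq_zero_iff (by linarith [h.1])).1 h.2, h.1⟩,
      fun h => ⟨h.2, (hM.age_eq_zero_iff (by linarith [h.2])).2 h.1⟩⟩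
  rw [hzeros] at hSn
  have htM : t ∈ M :=
    hM.isClosed.closure_subset_iff.2 inter_subset_left (hSn.mem_closure hSn.nonempty)
  have hct : c < t := (hSn.2 fun _ h => h.2.le).lt_of_ne fun h => hcM (h ▸ htM)
  exact ⟨_, hM.isGap_lastZero (by linarith) htM hct
    (disjoint_left.2 fun m hm hmM => hm.2.not_ge (hSn.1 ⟨hmM, hm.1⟩))⟩

end IsClosedFromZero

end

end AgeProcess

open AgeProcess in
theorem jump_times_exhausted_general
    (f : ℝ → ℝ) (hf : Continuous f) (L : Set ℝ) (hL : L.Finite)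
    (M : Set ℝ) (hM : M = {t : ℝ | 0 ≤ t ∧ f t ∈ L} ∪ {0})
    (U : ℝ → ℝ) (hU : ∀ t : ℝ, U t = t - sSup (M ∩ Set.Icc 0 t))
    (T S : ℝ → ℕ → EReal)
    (hT0 : ∀ x : ℝ, T x 0 = sInf {u : EReal | ∃ t : ℝ, u = (t : EReal) ∧ 0 ≤ t ∧ x < U t})
    (hS : ∀ (x : ℝ) (n : ℕ),
      S x n = sInf {u : EReal | ∃ t : ℝ, u = (t : EReal) ∧ T x n < (t : EReal) ∧ U t = 0})
    (hT : ∀ (x : ℝ) (n : ℕ),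
      T x (n + 1) = sInf {u : EReal | ∃ t : ℝ, u = (t : EReal) ∧ S x n < (t : EReal) ∧ x < U t}) :
    ∀ t : ℝ, (0 < t ∧ U t ≠ Function.leftLim U t) ↔
      ∃ q : ℚ, 0 < q ∧ ∃ n : ℕ, (t : EReal) = S (q : ℝ) n := by
  have hM' : IsClosedFromZero M := hM ▸ isClosedFromZero_of_preimage hf hL.isClosed
  obtain rfl : U = age M := funext hU
  have hTS (x : ℝ) : IsExcursionTimes M x (T x) (S x) := ⟨hT0 x, hS x, hT x⟩
  intro t
  rw [hM'.pos_and_age_ne_leftLim_iff]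
  constructor
  · rintro ⟨a, hat⟩
    obtain ⟨q, hq0, hqa⟩ := exists_rat_btwn (sub_pos.2 hat.lt)
    obtain ⟨n, hn⟩ := hM'.exists_S_eq (hTS q) hq0 hat (by linarith)
    exact ⟨q, Rat.cast_pos.1 hq0, n, hn.symm⟩
  · rintro ⟨q, hq, n, hn⟩
    exact hM'.exists_isGap_of_S_eq (hTS q) (Rat.cast_pos.2 hq) hn.symm

/-- The jump times of the age process `U_t = t - sup (M ∩ [0,t])` are exhausted by the
countable family of times `S_n^x` for rational `x > 0`, where
`T_1^x = inf{t : U_t > x}`, `S_n^x = inf{t > T_n^x : U_t = 0}` and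
`T_{n+1}^x = inf{t > S_n^x : U_t > x}` (infima taken in the extended reals, so that
`inf ∅ = +∞`).  Here `M = {t ≥ 0 : f t ∈ L} ∪ {0}` is assumed to be a perfect set
with empty interior, `L` a finite set containing at least one value attained by `f`. -/
theorem jump_times_exhausted
    (f : ℝ → ℝ) (hf : Continuous f) (L : Set ℝ) (hL : L.Finite)
    (hattain : ∃ t : ℝ, 0 ≤ t ∧ f t ∈ L)
    (M : Set ℝ) (hM : M = {t : ℝ | 0 ≤ t ∧ f t ∈ L} ∪ {0})
    (hperfect : ∀ t ∈ M, t ∈ closure (M \ {t}))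
    (hnowhere : interior M = ∅)
    (U : ℝ → ℝ) (hU : ∀ t : ℝ, U t = t - sSup (M ∩ Set.Icc 0 t))
    (T S : ℝ → ℕ → EReal)
    (hT0 : ∀ x : ℝ, T x 0 = sInf {u : EReal | ∃ t : ℝ, u = (t : EReal) ∧ 0 ≤ t ∧ x < U t})
    (hS : ∀ (x : ℝ) (n : ℕ),
      S x n = sInf {u : EReal | ∃ t : ℝ, u = (t : EReal) ∧ T x n < (t : EReal) ∧ U t = 0})
    (hT : ∀ (x : ℝ) (n : ℕ),
      T x (n + 1) = sInf {u : EReal | ∃ t : ℝ, u = (t : EReal) ∧ S x n < (t : EReal) ∧ x < U t}) :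
    ∀ t : ℝ, (0 < t ∧ U t ≠ Function.leftLim U t) ↔
      ∃ q : ℚ, 0 < q ∧ ∃ n : ℕ, (t : EReal) = S (q : ℝ) n :=
  jump_times_exhausted_general f hf L hL M hM U hU T S hT0 hS hT
end

section
/- Suppose F_1 and F_2 are two measures on (0,∞] with finite values of ∫ (1 − e^{−λx}) F_i(dx) for all λ > 0, and suppose their Laplace exponents agree: ∫ (1 − e^{−λx}) F_1(dx) = ∫ (1 − e^{−λx}) F_2(dx) for all λ > 0. Then F_1 = F_2 on (0,∞]. -/
open Set MeasureTheory
open scoped ENNReal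

/-!
Weighting a Lévy measure `F` by the density `e^{-u} - e^{-2u}` gives a finite measure whose image
under `u ↦ e^{-u}` lives on `[0,1]` and has `n`-th moment
`∫ (e^{-(n+1)u} - e^{-(n+2)u}) F(du) = ψ(n+2) - ψ(n+1)`, a difference of values of the Laplace
exponent in which the mass at `∞` cancels. Equal exponents thus give equal moments, hence equal
measures by Weierstrass approximation; as the density is positive on `(0,∞)`, this recovers `F`,
and then the masses at `∞` agree.
-/

open Real Polynomial

section Moments

variable {a b : ℝ} {μ ν : Measure ℝ}

lemma integrable_of_ae_mem_Icc [IsFiniteMeasure μ] (hμ : ∀ᵐ x ∂μ, x ∈ Icc a b) {g : ℝ → ℝ}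
    (hg : Continuous g) : Integrable g μ := by
  rw [← Measure.restrict_eq_self_of_ae_mem hμ]
  exact hg.integrableOn_Icc

lemma dist_integral_le_of_ae_mem_Icc [IsFiniteMeasure μ] (hμ : ∀ᵐ x ∂μ, x ∈ Icc a b)
    {g h : ℝ → ℝ} (hg : Continuous g) (hh : Continuous h) {δ : ℝ}
    (hgh : ∀ x ∈ Icc a b, dist (g x) (h x) ≤ δ) :
    dist (∫ x, g x ∂μ) (∫ x, h x ∂μ) ≤ δ * μ.real univ := by
  rw [dist_eq_norm,
    ← integral_sub (integrable_of_ae_mem_Icc hμ hg) (integrable_of_ae_mem_Icc hμ hh)]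
  refine norm_integral_le_of_norm_le_const ?_
  filter_upwards [hμ] with x hx
  rw [← dist_eq_norm]
  exact hgh x hx

lemma integral_eval_eq_of_integral_pow_eq [IsFiniteMeasure μ] [IsFiniteMeasure ν]
    (hμ : ∀ᵐ x ∂μ, x ∈ Icc a b) (hν : ∀ᵐ x ∂ν, x ∈ Icc a b)
    (h : ∀ n : ℕ, ∫ x, x ^ n ∂μ = ∫ x, x ^ n ∂ν) (p : ℝ[X]) :
    ∫ x, p.eval x ∂μ = ∫ x, p.eval x ∂ν := by
  induction p using Polynomial.induction_on' with
  | add p q hp hq =>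
    simp only [eval_add]
    rw [integral_add (integrable_of_ae_mem_Icc hμ p.continuous)
        (integrable_of_ae_mem_Icc hμ q.continuous),
      integral_add (integrable_of_ae_mem_Icc hν p.continuous)
        (integrable_of_ae_mem_Icc hν q.continuous), hp, hq]
  | monomial n c =>
    simp only [eval_monomial]
    rw [integral_const_mul, integral_const_mul, h n]

theorem MeasureTheory.Measure.ext_of_integral_pow_eq [IsFiniteMeasure μ] [IsFiniteMeasure ν]
    (hμ : ∀ᵐ x ∂μ, x ∈ Icc a b) (hν : ∀ᵐ x ∂ν, x ∈ Icc a b)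
    (h : ∀ n : ℕ, ∫ x, x ^ n ∂μ = ∫ x, x ^ n ∂ν) : μ = ν := by
  refine ext_of_forall_integral_eq_of_IsFiniteMeasure fun f => eq_of_forall_dist_le fun ε hε => ?_
  set C := μ.real univ + ν.real univ + 1
  obtain ⟨p, hp⟩ := exists_polynomial_near_of_continuousOn a b f f.continuous.continuousOn
    (ε / C) (by positivity)
  have hfp : ∀ x ∈ Icc a b, dist (f x) (p.eval x) ≤ ε / C := fun x hx =>
    (dist_comm _ _).trans_le (hp x hx).le
  calc dist (∫ x, f x ∂μ) (∫ x, f x ∂ν)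
      ≤ dist (∫ x, f x ∂μ) (∫ x, p.eval x ∂μ) + dist (∫ x, f x ∂ν) (∫ x, p.eval x ∂ν) := by
        rw [integral_eval_eq_of_integral_pow_eq hμ hν h p, dist_comm (∫ x, f x ∂ν)]
        exact dist_triangle _ _ _
    _ ≤ ε / C * μ.real univ + ε / C * ν.real univ :=
        add_le_add (dist_integral_le_of_ae_mem_Icc hμ f.continuous p.continuous hfp)
          (dist_integral_le_of_ae_mem_Icc hν f.continuous p.continuous hfp)
    _ ≤ ε := by
        rw [← mul_add, div_mul_eq_mul_div, div_le_iff₀ (by positivity)]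
        gcongr
        linarith

end Moments

section LaplaceExponent

noncomputable def laplaceExponent (F : Measure ℝ) (l : ℝ) : ℝ≥0∞ :=
  ∫⁻ u, ENNReal.ofReal (1 - exp (-(l * u))) ∂F

noncomputable def expNegSub (a b u : ℝ) : ℝ≥0∞ :=
  ENNReal.ofReal (exp (-(a * u)) - exp (-(b * u)))

variable {F : Measure ℝ}

lemma ofReal_one_sub_exp_neg_mul_le {l : ℝ} (hl : 0 ≤ l) (u : ℝ) :
    ENNReal.ofReal (1 - exp (-(l * u))) ≤ ENNReal.ofReal (max 1 l) * ENNReal.ofReal (min 1 u) := by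
  rw [← ENNReal.ofReal_mul (by positivity)]
  rcases le_total u 0 with hu | hu
  · rw [ENNReal.ofReal_of_nonpos (sub_nonpos.2 (one_le_exp (by nlinarith)))]
    exact zero_le
  refine ENNReal.ofReal_le_ofReal ?_
  rcases le_total u 1 with h1 | h1
  · rw [min_eq_right h1]
    nlinarith [add_one_le_exp (-(l * u)), le_max_right 1 l]
  · rw [min_eq_left h1]
    nlinarith [exp_pos (-(l * u)), le_max_left 1 l]

lemma laplaceExponent_lt_top (hF : ∫⁻ u, ENNReal.ofReal (min 1 u) ∂F < ⊤) {l : ℝ} (hl : 0 ≤ l) :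
    laplaceExponent F l < ⊤ :=
  calc laplaceExponent F l
      ≤ ∫⁻ u, ENNReal.ofReal (max 1 l) * ENNReal.ofReal (min 1 u) ∂F :=
        lintegral_mono (ofReal_one_sub_exp_neg_mul_le hl)
    _ = ENNReal.ofReal (max 1 l) * ∫⁻ u, ENNReal.ofReal (min 1 u) ∂F :=
        lintegral_const_mul' _ _ ENNReal.ofReal_ne_top
    _ < ⊤ := ENNReal.mul_lt_top ENNReal.ofReal_lt_top hF

lemma expNegSub_add_ofReal_one_sub {a b : ℝ} (ha : 0 ≤ a) (hab : a ≤ b) (u : ℝ) :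
    expNegSub a b u + ENNReal.ofReal (1 - exp (-(a * u)))
      = ENNReal.ofReal (1 - exp (-(b * u))) := by
  unfold expNegSub
  rcases le_total 0 u with hu | hu
  · rw [← ENNReal.ofReal_add (sub_nonneg.2 (exp_le_exp.2 (by nlinarith)))
      (sub_nonneg.2 (exp_le_one_iff.2 (by nlinarith))), sub_add_sub_cancel']
  · rw [ENNReal.ofReal_of_nonpos (sub_nonpos.2 (exp_le_exp.2 (by nlinarith))),
      ENNReal.ofReal_of_nonpos (sub_nonpos.2 (one_le_exp (by nlinarith))),
      ENNReal.ofReal_of_nonpos (sub_nonpos.2 (one_le_exp (by nlinarith))), zero_add]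

lemma lintegral_expNegSub_add_laplaceExponent {a b : ℝ} (ha : 0 ≤ a) (hab : a ≤ b) :
    ∫⁻ u, expNegSub a b u ∂F + laplaceExponent F a = laplaceExponent F b := by
  rw [laplaceExponent, ← lintegral_add_left (by unfold expNegSub; fun_prop)]
  exact lintegral_congr (expNegSub_add_ofReal_one_sub ha hab)

lemma lintegral_expNegSub_eq_of_laplaceExponent_add_eq {F₁ F₂ : Measure ℝ} {c₁ c₂ : ℝ≥0∞}
    (hψ : ∀ l : ℝ, 0 < l → laplaceExponent F₁ l + c₁ = laplaceExponent F₂ l + c₂)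
    {a b : ℝ} (ha : 0 < a) (hab : a ≤ b) (hfin : laplaceExponent F₁ a + c₁ ≠ ⊤) :
    ∫⁻ u, expNegSub a b u ∂F₁ = ∫⁻ u, expNegSub a b u ∂F₂ := by
  refine (ENNReal.add_left_inj hfin).mp ?_
  calc ∫⁻ u, expNegSub a b u ∂F₁ + (laplaceExponent F₁ a + c₁)
      = laplaceExponent F₂ b + c₂ := by
        rw [← add_assoc, lintegral_expNegSub_add_laplaceExponent ha.le hab, hψ b (ha.trans_le hab)]
    _ = ∫⁻ u, expNegSub a b u ∂F₂ + (laplaceExponent F₁ a + c₁) := by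
        rw [hψ a ha, ← add_assoc, lintegral_expNegSub_add_laplaceExponent ha.le hab]

lemma expNegSub_ne_zero_iff {a b : ℝ} (hab : a < b) (u : ℝ) : expNegSub a b u ≠ 0 ↔ 0 < u := by
  rw [expNegSub, ne_eq, ENNReal.ofReal_eq_zero, not_le, sub_pos, exp_lt_exp, neg_lt_neg_iff]
  exact ⟨fun h => by nlinarith, fun hu => by nlinarith⟩

end LaplaceExponent

section Tilting

lemma expNegSub_mul_ofReal_exp_neg_pow (n : ℕ) (u : ℝ) :
    expNegSub 1 2 u * ENNReal.ofReal (exp (-u) ^ n) = expNegSub (n + 1) (n + 2) u := by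
  rw [expNegSub, expNegSub, mul_comm, ← ENNReal.ofReal_mul (by positivity), ← exp_nat_mul,
    mul_sub, ← exp_add, ← exp_add]
  congr 3 <;> ring

lemma integral_pow_map_exp_neg_withDensity (F : Measure ℝ) (n : ℕ) :
    ∫ t, t ^ n ∂(F.withDensity (expNegSub 1 2)).map (fun u => exp (-u))
      = (∫⁻ u, expNegSub (n + 1) (n + 2) u ∂F).toReal := by
  rw [integral_map (by fun_prop) (by fun_prop),
    integral_eq_lintegral_of_nonneg_ae (ae_of_all _ fun u => by positivity) (by fun_prop),
    lintegral_withDensity_eq_lintegral_mul _ (by unfold expNegSub; fun_prop) (by fun_prop)]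
  simp only [Pi.mul_apply, expNegSub_mul_ofReal_exp_neg_pow]

lemma ae_mem_Icc_map_exp_neg_withDensity (F : Measure ℝ) :
    ∀ᵐ t ∂(F.withDensity (expNegSub 1 2)).map (fun u => exp (-u)), t ∈ Icc (0 : ℝ) 1 := by
  refine (ae_map_iff (by fun_prop) measurableSet_Icc).2 ?_
  rw [ae_withDensity_iff (by unfold expNegSub; fun_prop)]
  refine ae_of_all _ fun u hu => ⟨(exp_pos _).le, exp_le_one_iff.2 ?_⟩
  exact neg_nonpos.2 ((expNegSub_ne_zero_iff one_lt_two u).1 hu).le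

lemma isFiniteMeasure_withDensity_expNegSub {F : Measure ℝ}
    (hF : ∫⁻ u, ENNReal.ofReal (min 1 u) ∂F < ⊤) :
    IsFiniteMeasure (F.withDensity (expNegSub 1 2)) := by
  refine isFiniteMeasure_withDensity
    (ne_top_of_le_ne_top (laplaceExponent_lt_top hF zero_le_two).ne ?_)
  rw [← lintegral_expNegSub_add_laplaceExponent zero_le_one one_le_two]
  exact le_self_add

theorem withDensity_expNegSub_eq_of_laplaceExponent_add_eq {F₁ F₂ : Measure ℝ} {c₁ c₂ : ℝ≥0∞}
    (hF₁ : ∫⁻ u, ENNReal.ofReal (min 1 u) ∂F₁ < ⊤) (hF₂ : ∫⁻ u, ENNReal.ofReal (min 1 u) ∂F₂ < ⊤)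
    (hc₁ : c₁ ≠ ⊤) (hψ : ∀ l : ℝ, 0 < l → laplaceExponent F₁ l + c₁ = laplaceExponent F₂ l + c₂) :
    F₁.withDensity (expNegSub 1 2) = F₂.withDensity (expNegSub 1 2) := by
  have := isFiniteMeasure_withDensity_expNegSub hF₁
  have := isFiniteMeasure_withDensity_expNegSub hF₂
  have hexp : MeasurableEmbedding fun u : ℝ => exp (-u) :=
    (continuous_exp.comp continuous_neg).measurableEmbedding (exp_injective.comp neg_injective)
  refine hexp.map_injective (Measure.ext_of_integral_pow_eq (ae_mem_Icc_map_exp_neg_withDensity F₁)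
    (ae_mem_Icc_map_exp_neg_withDensity F₂) fun n => ?_)
  rw [integral_pow_map_exp_neg_withDensity, integral_pow_map_exp_neg_withDensity,
    lintegral_expNegSub_eq_of_laplaceExponent_add_eq hψ (by positivity) (by linarith)
      (ENNReal.add_ne_top.2 ⟨(laplaceExponent_lt_top hF₁ (by positivity)).ne, hc₁⟩)]

lemma eq_of_withDensity_expNegSub_eq {F₁ F₂ : Measure ℝ}
    (hF₁ : F₁ (Iic 0) = 0) (hF₂ : F₂ (Iic 0) = 0)
    (h : F₁.withDensity (expNegSub 1 2) = F₂.withDensity (expNegSub 1 2)) : F₁ = F₂ := by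
  have hinv : ∀ F : Measure ℝ, F (Iic 0) = 0 →
      (F.withDensity (expNegSub 1 2)).withDensity (fun u => (expNegSub 1 2 u)⁻¹) = F := by
    intro F hF
    refine withDensity_inv_same (by unfold expNegSub; fun_prop) ?_
      (ae_of_all _ fun _ => ENNReal.ofReal_ne_top)
    refine ae_iff.2 (measure_mono_null (fun u hu => ?_) hF)
    exact not_lt.1 fun h => hu ((expNegSub_ne_zero_iff one_lt_two u).2 h)
  rw [← hinv F₁ hF₁, ← hinv F₂ hF₂, h]

end Tilting

theorem levy_measure_unique_from_laplace_exponent_general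
    (F₁ F₂ : Measure ℝ)
    (hsupp₁ : F₁ (Set.Iic (0:ℝ)) = 0) (hsupp₂ : F₂ (Set.Iic (0:ℝ)) = 0)
    (hlevy₁ : ∫⁻ u, ENNReal.ofReal (min 1 u) ∂F₁ < ⊤)
    (hlevy₂ : ∫⁻ u, ENNReal.ofReal (min 1 u) ∂F₂ < ⊤)
    (c₁ c₂ : ℝ≥0∞) (hc₁ : c₁ ≠ ⊤)
    (hψ : ∀ l : ℝ, 0 < l →
      (∫⁻ u, ENNReal.ofReal (1 - Real.exp (-(l * u))) ∂F₁) + c₁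
        = (∫⁻ u, ENNReal.ofReal (1 - Real.exp (-(l * u))) ∂F₂) + c₂) :
    F₁ = F₂ ∧ c₁ = c₂ := by
  obtain rfl : F₁ = F₂ := eq_of_withDensity_expNegSub_eq hsupp₁ hsupp₂
    (withDensity_expNegSub_eq_of_laplaceExponent_add_eq hlevy₁ hlevy₂ hc₁ hψ)
  exact ⟨rfl,
    (ENNReal.add_right_inj (laplaceExponent_lt_top hlevy₁ zero_le_one).ne).mp (hψ 1 one_pos)⟩

/-- Uniqueness of the Laplace exponent: two Lévy measures on `(0,∞]` (modelled as
σ-finite measures `F₁, F₂` on `(0,∞)` together with masses `c₁, c₂` at `+∞`) with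
`∫ (1 ∧ u) dFᵢ < ∞`, whose Laplace exponents
`ψᵢ(λ) = ∫ (1 - e^{-λ u}) dFᵢ(u) + cᵢ` agree for all `λ > 0`, are equal. -/
theorem levy_measure_unique_from_laplace_exponent
    (F₁ F₂ : Measure ℝ) [SigmaFinite F₁] [SigmaFinite F₂]
    (hsupp₁ : F₁ (Set.Iic (0:ℝ)) = 0) (hsupp₂ : F₂ (Set.Iic (0:ℝ)) = 0)
    (hlevy₁ : ∫⁻ u, ENNReal.ofReal (min 1 u) ∂F₁ < ⊤)
    (hlevy₂ : ∫⁻ u, ENNReal.ofReal (min 1 u) ∂F₂ < ⊤)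
    (c₁ c₂ : ℝ≥0∞) (hc₁ : c₁ ≠ ⊤) (hc₂ : c₂ ≠ ⊤)
    (hψ : ∀ l : ℝ, 0 < l →
      (∫⁻ u, ENNReal.ofReal (1 - Real.exp (-(l * u))) ∂F₁) + c₁
        = (∫⁻ u, ENNReal.ofReal (1 - Real.exp (-(l * u))) ∂F₂) + c₂) :
    F₁ = F₂ ∧ c₁ = c₂ :=
  levy_measure_unique_from_laplace_exponent_general F₁ F₂ hsupp₁ hsupp₂ hlevy₁ hlevy₂ c₁ c₂ hc₁ hψ
end
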